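/- Fix α > 1, 0 < ε < 1, and 0 < λ, μ < ∞. There exists a finite constant C > 1 (independent of a) with the following property: for all a > 0, if K' = {z = x + iy ∈ ℂⁿ : x₁ ∈ (−2λa, 2λa), x₂,…,x_n ∈ (−2μa, 2μa), y ∈ Γ_{8√n·α}, y_n ∈ (a/2, 4a)} and K = {z : x₁ ∈ (−λa, λa), x₂,…,x_n ∈ (−μa, μa), y ∈ Γ_α, y_n ∈ (a, 2a)}, then every plurisubharmonic u on K' with u ≤ 1 on K' and mes({z ∈ K' : u(z) ≤ ε/2})/mes(K') > 1 − 1/C satisfies u < ε on K. -/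

import Mathlib

open MeasureTheory Set Metric

noncomputable section

instance (n : ℕ) : MeasureSpace (EuclideanSpace ℂ (Fin n)) :=
  { volume := Measure.map (MeasurableEquiv.toLp 2 (Fin n → ℂ)) volume }

/-- The open circular cone `Γ_α = {y ∈ ℝⁿ : |y| < α·y_n}` about the positive `y_n`-axis. -/
def coneGamma (n : ℕ) (α : ℝ) : Set (EuclideanSpace ℝ (Fin (n + 1))) :=
  {y | ‖y‖ < α * y (Fin.last n)}

/-- Imaginary part of a point of ℂⁿ, as a point of ℝⁿ. -/
def imPart {n : ℕ} (z : EuclideanSpace ℂ (Fin (n + 1))) : EuclideanSpace ℝ (Fin (n + 1)) :=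
  WithLp.toLp 2 (fun j => (z j).im)

/-- The small box `K` built on the cone `Γ_α`. -/
def smallBox (n : ℕ) (α lam mu a : ℝ) : Set (EuclideanSpace ℂ (Fin (n + 1))) :=
  {z | (z 0).re ∈ Set.Ioo (-(lam * a)) (lam * a) ∧
       (∀ j : Fin (n + 1), j ≠ 0 → (z j).re ∈ Set.Ioo (-(mu * a)) (mu * a)) ∧
       imPart z ∈ coneGamma n α ∧
       (z (Fin.last n)).im ∈ Set.Ioo a (2 * a)}

/-- The large box `K'` built on the enlarged cone `Γ_{8√n·α}`. -/
def largeBox (n : ℕ) (α lam mu a : ℝ) : Set (EuclideanSpace ℂ (Fin (n + 1))) :=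
  {z | (z 0).re ∈ Set.Ioo (-(2 * lam * a)) (2 * lam * a) ∧
       (∀ j : Fin (n + 1), j ≠ 0 → (z j).re ∈ Set.Ioo (-(2 * mu * a)) (2 * mu * a)) ∧
       imPart z ∈ coneGamma n (8 * Real.sqrt (n + 1) * α) ∧
       (z (Fin.last n)).im ∈ Set.Ioo (a / 2) (4 * a)}

/-- A surrogate definition of plurisubharmonicity on an open subset of ℂⁿ:
upper semicontinuity together with the sub-mean value inequality over Euclidean balls
(a property enjoyed by every plurisubharmonic function). -/
def PSHOn {n : ℕ} (u : EuclideanSpace ℂ (Fin n) → ℝ) (D : Set (EuclideanSpace ℂ (Fin n))) : Prop :=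
  UpperSemicontinuousOn u D ∧
  ∀ z : EuclideanSpace ℂ (Fin n), ∀ r : ℝ, 0 < r → Metric.closedBall z r ⊆ D →
    u z ≤ ((volume (Metric.ball z r)).toReal)⁻¹ * ∫ w in Metric.ball z r, u w

/-! For `z ∈ K` the ball `B = B(z, c·a)`, `c = min(λ, μ, 1/4)`, lies in `K'`, while `K'` lies
in a ball of radius `R·a` about `0`; so `mes K' ≤ M · mes B` with `M = (R/c)^(2n)` independent
of `a`. On `B` we have `u ≤ ε/2` off the bad set `K' \ {u ≤ ε/2}` and `u ≤ 1` on it, so the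
sub-mean value inequality gives `u(z) ≤ ε/2 + mes(bad)/mes B < ε/2 + M/C`, which is at most `ε`
once `C = 1 + 2M/ε`. -/

open scoped ENNReal

instance (m : ℕ) : (volume : Measure (EuclideanSpace ℂ (Fin m))).IsAddHaarMeasure := by
  show (Measure.map (MeasurableEquiv.toLp 2 (Fin m → ℂ)) volume).IsAddHaarMeasure
  exact (PiLp.continuousLinearEquiv 2 ℝ (fun _ : Fin m => ℂ)).symm.isAddHaarMeasure_map _

theorem UpperSemicontinuousOn.measurableSet_sep_le {X : Type*} [TopologicalSpace X]
    [MeasurableSpace X] [OpensMeasurableSpace X] {u : X → ℝ} {D : Set X}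
    (hu : UpperSemicontinuousOn u D) (hD : MeasurableSet D) (t : ℝ) :
    MeasurableSet {x ∈ D | u x ≤ t} := by
  have hm : Measurable (D.domRestrict u) := (upperSemicontinuousOn_iff_restrict.2 hu).measurable
  convert hD.subtype_image (hm (measurableSet_Iic (a := t))) using 1
  ext x
  simp [and_comm]

section MeasureEstimates

variable {X : Type*} [MeasurableSpace X] {μ : Measure X}

theorem measureReal_sdiff_lt_of_div_gt {D G : Set X} {C : ℝ} (hC : 1 < C) (hGD : G ⊆ D)
    (hG : MeasurableSet G) (hD : μ D ≠ ∞)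
    (h : μ.real G / μ.real D > 1 - 1 / C) : μ.real (D \ G) < μ.real D / C := by
  have hC0 : 0 < C := by linarith
  have hD0 : 0 < μ.real D := by
    refine measureReal_nonneg.lt_of_ne fun h0 => ?_
    rw [← h0, div_zero] at h
    linarith [(div_lt_one hC0).2 hC]
  rw [gt_iff_lt, lt_div_iff₀ hD0] at h
  rw [measureReal_sdiff hGD hG hD]
  linarith [(show μ.real D / C = μ.real D - (1 - 1 / C) * μ.real D by field_simp; ring)]

theorem le_add_measureReal_div_of_le_inv_mul_setIntegral {u : X → ℝ} {B E : Set X} {s : ℝ}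
    {z : X} (hmean : u z ≤ (μ.real B)⁻¹ * ∫ x in B, u x ∂μ) (hB : MeasurableSet B)
    (hB0 : 0 < μ.real B) (hE : MeasurableSet E) (hEμ : μ E ≠ ∞) (hs : 0 ≤ s)
    (hu1 : ∀ x ∈ B, u x ≤ 1) (hus : ∀ x ∈ B \ E, u x ≤ s) :
    u z ≤ s + μ.real E / μ.real B := by
  have hBμ : μ B ≠ ∞ := fun h => by simp [measureReal_def, h] at hB0
  have hbound : ∀ x ∈ B, u x ≤ s + E.indicator 1 x := by
    intro x hx
    by_cases hxE : x ∈ E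
    · simp only [indicator_of_mem hxE, Pi.one_apply]; linarith [hu1 x hx]
    · simp only [indicator_of_notMem hxE, add_zero]; exact hus x ⟨hx, hxE⟩
  have hint : ∫ x in B, u x ∂μ ≤ s * μ.real B + μ.real E := by
    by_cases hui : IntegrableOn u B μ
    · have hind : IntegrableOn (E.indicator 1) B μ :=
        (integrableOn_const (C := (1 : ℝ)) hBμ).indicator hE
      calc ∫ x in B, u x ∂μ ≤ ∫ x in B, (s + E.indicator 1 x) ∂μ :=
            setIntegral_mono_on hui ((integrableOn_const hBμ).add hind) hB hbound
        _ = s * μ.real B + μ.real (E ∩ B) := by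
            rw [integral_add (integrableOn_const (C := s) hBμ) hind, setIntegral_const,
              integral_indicator_one hE, measureReal_restrict_apply hE, smul_eq_mul, mul_comm]
        _ ≤ s * μ.real B + μ.real E := by gcongr; exact inter_subset_left
    · rw [integral_undef hui]; positivity
  calc u z ≤ (μ.real B)⁻¹ * (s * μ.real B + μ.real E) := hmean.trans (by gcongr)
    _ = s + μ.real E / μ.real B := by field_simp

theorem lt_two_mul_of_le_inv_mul_setIntegral {u : X → ℝ} {K B : Set X} {z : X} {s M : ℝ}
    (hs : 0 < s) (hM : 0 < M) (hB : MeasurableSet B) (hB0 : 0 < μ.real B) (hBK : B ⊆ K)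
    (hK : MeasurableSet K) (hKμ : μ K ≠ ∞) (hKB : μ.real K ≤ M * μ.real B)
    (hG : MeasurableSet {x ∈ K | u x ≤ s}) (hu1 : ∀ x ∈ K, u x ≤ 1)
    (hmean : u z ≤ (μ.real B)⁻¹ * ∫ x in B, u x ∂μ)
    (hratio : μ.real {x ∈ K | u x ≤ s} / μ.real K > 1 - 1 / (1 + M / s)) :
    u z < 2 * s := by
  have hC : 1 < 1 + M / s := lt_add_of_pos_right 1 (div_pos hM hs)
  have hbad : μ.real (K \ {x ∈ K | u x ≤ s}) / μ.real B < M / (1 + M / s) := by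
    rw [div_lt_iff₀ hB0, div_mul_eq_mul_div]
    exact (measureReal_sdiff_lt_of_div_gt hC (sep_subset K _) hG hKμ hratio).trans_le
      (by gcongr)
  have hMC : M / (1 + M / s) < s := by
    rw [div_lt_iff₀ (by linarith), mul_add, mul_one, mul_div_cancel₀ M hs.ne']
    linarith
  have hz := le_add_measureReal_div_of_le_inv_mul_setIntegral hmean hB hB0 (hK.diff hG)
    (measure_ne_top_of_subset sdiff_subset hKμ) hs.le (fun x hx => hu1 x (hBK hx))
    (fun x hx => by_contra fun h => hx.2 ⟨hBK hx.1, fun hxG => h hxG.2⟩)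
  linarith

end MeasureEstimates

theorem measureReal_le_pow_mul_measureReal_ball {E : Type*} [NormedAddCommGroup E]
    [NormedSpace ℝ E] [MeasurableSpace E] [BorelSpace E] [FiniteDimensional ℝ E] [Nontrivial E]
    (μ : Measure E) [μ.IsAddHaarMeasure] {s : Set E} {x y : E} {r R : ℝ} (hr : 0 < r)
    (hR : 0 ≤ R) (hs : s ⊆ closedBall x R) :
    μ.real s ≤ (R / r) ^ Module.finrank ℝ E * μ.real (ball y r) := by
  calc μ.real s ≤ μ.real (closedBall x R) := measureReal_mono hs measure_closedBall_lt_top.ne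
    _ = (R / r) ^ Module.finrank ℝ E * (r ^ Module.finrank ℝ E * μ.real (ball 0 1)) := by
        rw [Measure.addHaar_real_closedBall μ x hR, div_pow]; field_simp
    _ = (R / r) ^ Module.finrank ℝ E * μ.real (ball y r) := by
        rw [← Measure.addHaar_real_closedBall μ y hr.le,
          Measure.addHaar_real_closedBall_eq_addHaar_real_ball]

section Boxes

variable {n : ℕ}

theorem abs_re_sub_le_norm_sub {ι : Type*} [Fintype ι] (z w : EuclideanSpace ℂ ι) (j : ι) :
    |(z j).re - (w j).re| ≤ ‖z - w‖ := by
  simpa using (Complex.abs_re_le_norm (z j - w j)).trans (PiLp.norm_apply_le (z - w) j)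

theorem abs_im_sub_le_norm_sub {ι : Type*} [Fintype ι] (z w : EuclideanSpace ℂ ι) (j : ι) :
    |(z j).im - (w j).im| ≤ ‖z - w‖ := by
  simpa using (Complex.abs_im_le_norm (z j - w j)).trans (PiLp.norm_apply_le (z - w) j)

theorem norm_imPart_sub_le (z w : EuclideanSpace ℂ (Fin (n + 1))) :
    ‖imPart z - imPart w‖ ≤ ‖z - w‖ := by
  simp only [EuclideanSpace.norm_eq, imPart, ← WithLp.toLp_sub, PiLp.sub_apply, Pi.sub_apply,
    Real.norm_eq_abs]
  gcongr with j
  simpa using Complex.abs_im_le_norm (z j - w j)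

theorem norm_sq_eq_sum_re_sq_add_norm_imPart_sq (z : EuclideanSpace ℂ (Fin (n + 1))) :
    ‖z‖ ^ 2 = ∑ j, (z j).re ^ 2 + ‖imPart z‖ ^ 2 := by
  rw [EuclideanSpace.norm_sq_eq, EuclideanSpace.norm_sq_eq, ← Finset.sum_add_distrib]
  congr! 1 with j
  simp only [imPart, Real.norm_eq_abs, sq_abs, Complex.sq_norm, Complex.normSq_apply]
  ring

theorem continuous_imPart : Continuous (@imPart n) := by
  unfold imPart; fun_prop

theorem isOpen_largeBox (α lam mu a : ℝ) : IsOpen (largeBox n α lam mu a) := by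
  have hre (j : Fin (n + 1)) : Continuous fun z : EuclideanSpace ℂ (Fin (n + 1)) => (z j).re := by
    fun_prop
  have him (j : Fin (n + 1)) : Continuous fun z : EuclideanSpace ℂ (Fin (n + 1)) => (z j).im := by
    fun_prop
  simp only [largeBox, coneGamma, ofPred_and, ofPred_forall]
  refine (isOpen_Ioo.preimage (hre 0)).inter (.inter ?_ (.inter ?_ (isOpen_Ioo.preimage (him _))))
  · exact isOpen_iInter_of_finite fun j =>
      isOpen_iInter_of_finite fun _ => isOpen_Ioo.preimage (hre j)
  · exact isOpen_lt (continuous_norm.comp continuous_imPart) (continuous_const.mul (him _))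

theorem closedBall_subset_largeBox {α lam mu a c : ℝ} (hα : 1 ≤ α) (ha : 0 < a)
    (hcl : c ≤ lam) (hcm : c ≤ mu) (hc : c ≤ 1 / 4) {z : EuclideanSpace ℂ (Fin (n + 1))}
    (hz : z ∈ smallBox n α lam mu a) : closedBall z (c * a) ⊆ largeBox n α lam mu a := by
  obtain ⟨⟨hz0l, hz0r⟩, hzj, hzcone, hzl, hzr⟩ := hz
  intro w hw
  rw [mem_closedBall, dist_eq_norm] at hw
  have hca : c * a ≤ a / 4 := by nlinarith
  have hcla : c * a ≤ lam * a := mul_le_mul_of_nonneg_right hcl ha.le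
  have hcma : c * a ≤ mu * a := mul_le_mul_of_nonneg_right hcm ha.le
  have hre (j : Fin (n + 1)) := abs_le.1 ((abs_re_sub_le_norm_sub w z j).trans hw)
  obtain ⟨hlastl, hlastr⟩ := abs_le.1 ((abs_im_sub_le_norm_sub w z (Fin.last n)).trans hw)
  refine ⟨⟨?_, ?_⟩, fun j hj => ⟨?_, ?_⟩, ?_, ?_, ?_⟩
  · linarith [hre 0]
  · linarith [hre 0]
  · linarith [hre j, (hzj j hj).1]
  · linarith [hre j, (hzj j hj).2]
  · change ‖imPart z‖ < α * (z (Fin.last n)).im at hzcone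
    change ‖imPart w‖ < 8 * √((n : ℝ) + 1) * α * (w (Fin.last n)).im
    set y := (w (Fin.last n)).im
    have hy : 3 * a / 4 ≤ y := by linarith
    have hsqrt : 1 ≤ √((n : ℝ) + 1) :=
      Real.one_le_sqrt.2 (by linarith [n.cast_nonneg (α := ℝ)])
    calc ‖imPart w‖ ≤ ‖imPart z‖ + c * a := by
          linarith [norm_sub_norm_le (imPart w) (imPart z), norm_imPart_sub_le w z]
      _ < α * (y + a / 4) + a / 4 := by
          nlinarith [mul_le_mul_of_nonneg_left (show (z (Fin.last n)).im ≤ y + a / 4 by linarith)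
            (show 0 ≤ α by linarith)]
      _ ≤ 2 * α * y := by nlinarith
      _ ≤ 8 * √((n : ℝ) + 1) * α * y := by
          have hαy : 0 ≤ α * y := mul_nonneg (by linarith) (by linarith)
          nlinarith [mul_nonneg hαy (sub_nonneg.2 hsqrt)]
  · linarith
  · linarith

theorem largeBox_subset_closedBall {α lam mu a : ℝ} (hα : 0 ≤ α) (hlam : 0 ≤ lam)
    (hmu : 0 ≤ mu) (ha : 0 ≤ a) :
    largeBox n α lam mu a ⊆ closedBall 0 ((n + 1) * (2 * (lam + mu) + 32 * α) * a) := by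
  rintro z ⟨⟨hz0l, hz0r⟩, hzj, hzcone, -, hzr⟩
  change ‖imPart z‖ < 8 * √((n : ℝ) + 1) * α * (z (Fin.last n)).im at hzcone
  set A := 2 * (lam + mu) * a
  set B := 32 * α * a
  have hN : (1 : ℝ) ≤ n + 1 := by linarith [n.cast_nonneg (α := ℝ)]
  have hre (j : Fin (n + 1)) : (z j).re ^ 2 ≤ A ^ 2 := by
    rcases eq_or_ne j 0 with rfl | hj
    · apply sq_le_sq' <;> nlinarith
    · obtain ⟨hl, hr⟩ := hzj j hj
      apply sq_le_sq' <;> nlinarith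
  have hresum : ∑ j, (z j).re ^ 2 ≤ (n + 1) * A ^ 2 := by
    simpa using Finset.sum_le_card_nsmul Finset.univ _ _ fun j _ => hre j
  have him : ‖imPart z‖ ^ 2 ≤ (n + 1) * B ^ 2 := by
    have hle : ‖imPart z‖ ≤ √((n : ℝ) + 1) * B := by
      have h8 : 0 ≤ 8 * √((n : ℝ) + 1) * α := by positivity
      nlinarith [mul_le_mul_of_nonneg_left hzr.le h8]
    calc ‖imPart z‖ ^ 2 ≤ (√((n : ℝ) + 1) * B) ^ 2 := by gcongr
      _ = (n + 1) * B ^ 2 := by rw [mul_pow, Real.sq_sqrt (by linarith)]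
  rw [mem_closedBall_zero_iff]
  refine le_of_pow_le_pow_left₀ two_ne_zero (by positivity) ?_
  calc ‖z‖ ^ 2 = ∑ j, (z j).re ^ 2 + ‖imPart z‖ ^ 2 :=
        norm_sq_eq_sum_re_sq_add_norm_imPart_sq z
    _ ≤ (n + 1) * (A ^ 2 + B ^ 2) := by linarith
    _ ≤ (n + 1) * (A + B) ^ 2 := by
      gcongr; nlinarith [mul_nonneg (by positivity : 0 ≤ A) (by positivity : 0 ≤ B)]
    _ ≤ (n + 1) * ((n + 1) * (A + B) ^ 2) := le_mul_of_one_le_left (by positivity) hN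
    _ = ((n + 1) * (2 * (lam + mu) + 32 * α) * a) ^ 2 := by ring

end Boxes

theorem psh_cone_box_estimate_general
    (n : ℕ) (α ε lam mu : ℝ) (hα : 1 < α) (hε0 : 0 < ε)
    (hlam : 0 < lam) (hmu : 0 < mu) :
    ∃ C : ℝ, 1 < C ∧ ∀ a : ℝ, 0 < a →
      ∀ u : EuclideanSpace ℂ (Fin (n + 1)) → ℝ,
        PSHOn u (largeBox n α lam mu a) →
        (∀ z ∈ largeBox n α lam mu a, u z ≤ 1) →
        (volume {z ∈ largeBox n α lam mu a | u z ≤ ε / 2}).toReal /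
            (volume (largeBox n α lam mu a)).toReal > 1 - 1 / C →
        ∀ z ∈ smallBox n α lam mu a, u z < ε := by
  set c := min (min lam mu) (1 / 4)
  have hc : 0 < c := lt_min (lt_min hlam hmu) (by norm_num)
  set R := (n + 1) * (2 * (lam + mu) + 32 * α)
  set M := (R / c) ^ Module.finrank ℝ (EuclideanSpace ℂ (Fin (n + 1)))
  have hM : 0 < M := by positivity
  refine ⟨1 + M / (ε / 2), lt_add_of_pos_right 1 (by positivity),
    fun a ha u hu hu1 hratio z hz => ?_⟩
  have hBK : closedBall z (c * a) ⊆ largeBox n α lam mu a := closedBall_subset_largeBox hα.le ha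
    ((min_le_left _ _).trans (min_le_left _ _)) ((min_le_left _ _).trans (min_le_right _ _))
    (min_le_right _ _) hz
  have hK : MeasurableSet (largeBox n α lam mu a) := (isOpen_largeBox α lam mu a).measurableSet
  have hKR : largeBox n α lam mu a ⊆ closedBall 0 (R * a) :=
    largeBox_subset_closedBall (by linarith) hlam.le hmu.le ha.le
  have hKB : volume.real (largeBox n α lam mu a) ≤ M * volume.real (ball z (c * a)) := by
    simpa only [mul_div_mul_right R c ha.ne'] using measureReal_le_pow_mul_measureReal_ball
      volume (y := z) (r := c * a) (R := R * a) (by positivity) (by positivity) hKR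
  have hB0 : 0 < volume.real (ball z (c * a)) :=
    ENNReal.toReal_pos (measure_ball_pos volume z (by positivity)).ne' measure_ball_lt_top.ne
  have hKμ : volume (largeBox n α lam mu a) ≠ ∞ :=
    ((measure_mono hKR).trans_lt measure_closedBall_lt_top).ne
  simpa only [mul_div_cancel₀ ε two_ne_zero] using lt_two_mul_of_le_inv_mul_setIntegral
    (half_pos hε0) hM measurableSet_ball hB0 (ball_subset_closedBall.trans hBK) hK hKμ hKB
    (hu.1.measurableSet_sep_le hK _) hu1 (hu.2 z _ (by positivity) hBK) hratio

/-- Scale-invariant version: there is a constant `C > 1`, independent of `a`, such that any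
plurisubharmonic function on the large box which is `≤ 1` and is `≤ ε/2` off a set of relative
measure `< 1/C` satisfies `u < ε` on the small box. -/
theorem psh_cone_box_estimate
    (n : ℕ) (α ε lam mu : ℝ) (hα : 1 < α) (hε0 : 0 < ε) (hε1 : ε < 1)
    (hlam : 0 < lam) (hmu : 0 < mu) :
    ∃ C : ℝ, 1 < C ∧ ∀ a : ℝ, 0 < a →
      ∀ u : EuclideanSpace ℂ (Fin (n + 1)) → ℝ,
        PSHOn u (largeBox n α lam mu a) →
        (∀ z ∈ largeBox n α lam mu a, u z ≤ 1) →
        (volume {z ∈ largeBox n α lam mu a | u z ≤ ε / 2}).toReal /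
            (volume (largeBox n α lam mu a)).toReal > 1 - 1 / C →
        ∀ z ∈ smallBox n α lam mu a, u z < ε :=
  psh_cone_box_estimate_general n α ε lam mu hα hε0 hlam hmu
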